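/- arXiv:2011.03776 — 2 statements merged into one kernel-verified Lean document; each statement's English description precedes it below -/
import Mathlib

section
/- Let A be a real symmetric (n+1)×(n+1) matrix satisfying A·𝟏 = 0 and A·x = e_R − e_L, where 𝟏 is the all-ones vector, x = (0, h, 2h, …, nh)ᵀ with h = 1/n, e_L = (1,0,…,0)ᵀ, e_R = (0,…,0,1)ᵀ. Write A in block form with central (n−1)×(n−1) block Ā (rows/columns 1..n−1). Then rank(A) = rank(Ā) + 1. -/
open Matrix

noncomputable section

def onesVec (n : ℕ) : Fin (n+1) → ℝ := fun _ => 1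

def gridVec (n : ℕ) : Fin (n+1) → ℝ := fun i => (i : ℝ) / n

def eL (n : ℕ) : Fin (n+1) → ℝ := fun i => if i.1 = 0 then 1 else 0

def eR (n : ℕ) : Fin (n+1) → ℝ := fun i => if i.1 = n then 1 else 0

def interiorEmb (n : ℕ) : Fin (n-1) → Fin (n+1) :=
  fun i => ⟨i.1 + 1, by have := i.isLt; omega⟩

def centralBlock (n : ℕ) (A : Matrix (Fin (n+1)) (Fin (n+1)) ℝ) :
    Matrix (Fin (n-1)) (Fin (n-1)) ℝ :=
  A.submatrix (interiorEmb n) (interiorEmb n)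

def pad (n : ℕ) (B : Matrix (Fin (n-1)) (Fin (n-1)) ℝ) :
    Matrix (Fin (n+1)) (Fin (n+1)) ℝ :=
  fun i j =>
    if hi : 0 < i.1 ∧ i.1 < n then
      if hj : 0 < j.1 ∧ j.1 < n then
        B ⟨i.1 - 1, by omega⟩ ⟨j.1 - 1, by omega⟩
      else 0
    else 0

def G2 (n : ℕ) (A : Matrix (Fin (n+1)) (Fin (n+1)) ℝ) :
    Matrix (Fin (n+1)) (Fin (n+1)) ℝ :=
  pad n (centralBlock n A)⁻¹

def Aplus (n : ℕ) (A : Matrix (Fin (n+1)) (Fin (n+1)) ℝ) :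
    Matrix (Fin (n+1)) (Fin (n+1)) ℝ :=
  (1 - ((n : ℝ) + 1)⁻¹ • vecMulVec (onesVec n) (onesVec n)) * G2 n A *
      (1 - ((n : ℝ) + 1)⁻¹ • vecMulVec (onesVec n) (onesVec n)) +
    vecMulVec (gridVec n - (1/2 : ℝ) • onesVec n)
      (gridVec n - (1/2 : ℝ) • onesVec n)

/-!
The vectors `1 - x` and `x` equal `e_L` and `e_R` on the boundary, and `A` maps them to
`±(e_L - e_R)`, which vanishes on the interior. Ordering the indices as interior ⊕ boundary, this
reads `A * [X; I] = [0; D]`, where the columns of `X` are the interior parts of `1 - x` and `x`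
and `D = [[1, -1], [-1, 1]]`. For symmetric `A` this forces the congruence
`A = Uᵀ * diag(Ā, D) * U` with the unipotent `U = [[I, -X], [0, I]]`, so
`rank A = rank Ā + rank D = rank Ā + 1`.
-/

def Submodule.prodEquivProd {R M N : Type*} [Semiring R] [AddCommMonoid M] [AddCommMonoid N]
    [Module R M] [Module R N] (S : Submodule R M) (T : Submodule R N) :
    S.prod T ≃ₗ[R] S × T where
  toFun x := (⟨x.1.1, x.2.1⟩, ⟨x.1.2, x.2.2⟩)
  invFun x := ⟨(x.1.1, x.2.1), ⟨x.1.2, x.2.2⟩⟩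
  map_add' _ _ := rfl
  map_smul' _ _ := rfl

namespace Matrix

variable {K m p : Type*} [Field K]

theorem rank_fromBlocks_zero_zero [Fintype m] [Fintype p] (P : Matrix m m K) (D : Matrix p p K) :
    (fromBlocks P 0 0 D).rank = P.rank + D.rank := by
  let e := LinearEquiv.sumArrowLequivProdArrow m p K K
  have hlin : (fromBlocks P 0 0 D).mulVecLin =
      e.symm.toLinearMap ∘ₗ (P.mulVecLin.prodMap D.mulVecLin) ∘ₗ e.toLinearMap := by
    refine LinearMap.ext fun v => ?_
    ext (i | i) <;> simp [e, mulVec, dotProduct]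
  rw [rank, hlin, LinearMap.range_comp, LinearMap.range_comp_of_range_eq_top _ e.range,
    LinearMap.range_prodMap, LinearEquiv.finrank_map_eq,
    (Submodule.prodEquivProd _ _).finrank_eq, Module.finrank_prod, rank, rank]

theorem rank_eq_rank_toBlocks₁₁_add_of_mul_fromRows [Fintype m] [Fintype p] [DecidableEq m]
    [DecidableEq p]
    {M : Matrix (m ⊕ p) (m ⊕ p) K} (hM : M.IsSymm) {X : Matrix m p K} {D : Matrix p p K}
    (h : M * fromRows X (1 : Matrix p p K) = fromRows 0 D) :
    M.rank = M.toBlocks₁₁.rank + D.rank := by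
  set P := M.toBlocks₁₁
  set Q := M.toBlocks₁₂
  obtain ⟨hP, hQ, -, -⟩ := isSymm_fromBlocks_iff.1 (M.fromBlocks_toBlocks.symm ▸ hM)
  have hPt : Pᵀ = P := hP
  have hblocks : M = fromBlocks P Q Qᵀ M.toBlocks₂₂ := by rw [hQ, fromBlocks_toBlocks]
  rw [hblocks, fromBlocks_mul_fromRows, Matrix.mul_one, Matrix.mul_one] at h
  obtain ⟨hPX, hS⟩ := fromRows_inj h
  have hQ' : Q = -(P * X) := (neg_eq_of_add_eq_zero_right hPX).symm
  set U : Matrix (m ⊕ p) (m ⊕ p) K := fromBlocks 1 (-X) 0 1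
  have hU : IsUnit U.det := by simp [U]
  have hcongr : M = Uᵀ * fromBlocks P 0 0 D * U := by
    rw [hblocks, ← hS, hQ']
    simp [U, fromBlocks_transpose, fromBlocks_multiply, transpose_mul, hPt, Matrix.mul_assoc]
  rw [hcongr, rank_mul_eq_left_of_isUnit_det _ _ hU,
    rank_mul_eq_right_of_isUnit_det _ _ (by rwa [det_transpose]), rank_fromBlocks_zero_zero]

theorem rank_vecMulVec_eq_one {n : Type*} [Fintype n] [DecidableEq n] {w : m → K} {v : n → K}
    (hw : w ≠ 0) (hv : v ≠ 0) : (vecMulVec w v).rank = 1 := by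
  refine le_antisymm (rank_vecMulVec_le w v) (Nat.one_le_iff_ne_zero.2 fun h => ?_)
  obtain ⟨j, hj⟩ := Function.ne_iff.1 hv
  rw [rank, Submodule.finrank_eq_zero, LinearMap.range_eq_bot] at h
  have := congr($h (Pi.single j 1))
  rw [mulVecLin_apply, vecMulVec_mulVec, dotProduct_single, mul_one] at this
  exact smul_ne_zero (by simpa using hj) hw this

theorem mul_transpose_of {ι κ : Type*} [Fintype ι] (A : Matrix m ι K) (v : κ → ι → K) :
    A * (of v)ᵀ = (of fun k => A *ᵥ v k)ᵀ :=
  rfl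

end Matrix

theorem interiorEmb_injective (n : ℕ) : Function.Injective (interiorEmb n) := fun i j h => by
  simpa [interiorEmb, Fin.ext_iff] using h

def interiorSumBoundary (n : ℕ) (hn : n ≠ 0) : Fin (n - 1) ⊕ Fin 2 ≃ Fin (n + 1) :=
  Equiv.ofBijective (Sum.elim (interiorEmb n) ![0, Fin.last n]) <| by
    refine (Fintype.bijective_iff_injective_and_card _).2 ⟨?_, by simp; omega⟩
    refine (interiorEmb_injective n).sumElim ?_ fun i k => ?_
    · intro k l
      fin_cases k <;> fin_cases l <;> simp [Fin.ext_iff, hn, hn.symm]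
    · have := i.isLt
      fin_cases k <;> simp [interiorEmb, Fin.ext_iff]; omega

theorem toBlocks₁₁_submatrix_interiorSumBoundary {n : ℕ} (hn : n ≠ 0)
    (A : Matrix (Fin (n+1)) (Fin (n+1)) ℝ) :
    (A.submatrix (interiorSumBoundary n hn) (interiorSumBoundary n hn)).toBlocks₁₁ =
      centralBlock n A :=
  rfl

theorem submatrix_interiorSumBoundary_mul_fromRows {n : ℕ} (hn : n ≠ 0)
    {A : Matrix (Fin (n+1)) (Fin (n+1)) ℝ} (h1 : A *ᵥ onesVec n = 0)
    (hx : A *ᵥ gridVec n = eR n - eL n) :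
    A.submatrix (interiorSumBoundary n hn) (interiorSumBoundary n hn) *
        fromRows ((of ![onesVec n - gridVec n, gridVec n])ᵀ.submatrix (interiorEmb n) id)
          (1 : Matrix (Fin 2) (Fin 2) ℝ) =
      fromRows 0 (vecMulVec ![1, -1] ![1, -1]) := by
  set V := (of ![onesVec n - gridVec n, gridVec n])ᵀ
  have hV : fromRows (V.submatrix (interiorEmb n) id) (1 : Matrix (Fin 2) (Fin 2) ℝ) =
      V.submatrix (interiorSumBoundary n hn) id := by
    ext (i | k) l
    · rfl
    · fin_cases k <;> fin_cases l <;> simp [V, interiorSumBoundary, onesVec, gridVec, hn]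
  have hAV : A * V = (of ![eL n - eR n, eR n - eL n])ᵀ := by
    rw [mul_transpose_of]
    congr 2
    ext k : 1
    fin_cases k <;> simp [mulVec_sub, h1, hx]
  rw [hV, submatrix_mul_equiv, hAV]
  ext (i | k) l
  · have := i.isLt
    fin_cases l <;> simp [interiorSumBoundary, interiorEmb, eL, eR] <;> omega
  · fin_cases k <;> fin_cases l <;> simp [interiorSumBoundary, eL, eR, hn, hn.symm]

theorem rank_A_eq_rank_central_add_one
    (n : ℕ) (hn : 2 ≤ n) (A : Matrix (Fin (n+1)) (Fin (n+1)) ℝ)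
    (hsym : A.IsSymm)
    (h1 : A *ᵥ onesVec n = 0)
    (hx : A *ᵥ gridVec n = eR n - eL n) :
    A.rank = (centralBlock n A).rank + 1 := by
  have hn0 : n ≠ 0 := by omega
  set e := interiorSumBoundary n hn0
  rw [← rank_submatrix A e e,
    rank_eq_rank_toBlocks₁₁_add_of_mul_fromRows (hsym.submatrix e)
      (submatrix_interiorSumBoundary_mul_fromRows hn0 h1 hx),
    toBlocks₁₁_submatrix_interiorSumBoundary, rank_vecMulVec_eq_one (by simp) (by simp)]
end
end

section
/- Let A be a symmetric (n+1)×(n+1) matrix satisfying A𝟏 = 0 and Ax = e_R − e_L. Define Z as the matrix acting by Z = [[1, 𝟏⃗ᵀ, 1],[0, Ī, 0],[0, x⃗ᵀ, 1]] in the block decomposition (first row, interior, last row), where 𝟏⃗ and x⃗ are the interior parts of 𝟏 and x. Then Z is invertible and Z A Zᵀ = diag(0, Ā, 1), the block diagonal matrix with top-left scalar 0, central block Ā and bottom-right scalar 1. -/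
/-!
The rows of `Z` are `𝟏`, the interior unit vectors and `x`, so the entries of `Z A Zᵀ` are the
values `z_k ⬝ A z_j` of the bilinear form of `A` on these rows; they are read off from `A 𝟏 = 0`,
`A x = e_R - e_L` and the symmetry of `A`. Expanding `det Z` along the first column, whose only
nonzero entry is the top one (`x₀ = 0`), leaves a lower unitriangular minor, so `det Z = 1`.
-/

open Matrix

noncomputable section

def Zmat (n : ℕ) : Matrix (Fin (n+1)) (Fin (n+1)) ℝ :=
  fun i j =>
    if i.1 = 0 then 1
    else if i.1 = n then gridVec n j
    else if i = j then 1 else 0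

theorem Matrix.IsSymm.dotProduct_mulVec_comm {ι R : Type*} [Fintype ι] [CommSemiring R]
    {A : Matrix ι ι R} (hA : A.IsSymm) (u v : ι → R) :
    u ⬝ᵥ A *ᵥ v = v ⬝ᵥ A *ᵥ u := by
  rw [dotProduct_mulVec, ← mulVec_transpose, hA.eq, dotProduct_comm]

variable {n : ℕ}

theorem eq_zero_or_eq_last_or_exists_interiorEmb (i : Fin (n+1)) :
    i = 0 ∨ i = Fin.last n ∨ ∃ m, i = interiorEmb n m := by
  by_cases h0 : i = 0
  · exact .inl h0
  by_cases hl : i = Fin.last n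
  · exact .inr (.inl hl)
  have h0' : i.1 ≠ 0 := fun h => h0 (Fin.ext h)
  have hl' : i.1 ≠ n := fun h => hl (Fin.ext h)
  have := i.isLt
  exact .inr (.inr ⟨⟨i.1 - 1, by omega⟩, Fin.ext (by simp only [interiorEmb]; omega)⟩)

theorem interiorEmb_ne_zero (m : Fin (n-1)) : interiorEmb n m ≠ 0 := by
  simp [interiorEmb, Fin.ext_iff]

theorem interiorEmb_ne_last (m : Fin (n-1)) : interiorEmb n m ≠ Fin.last n := by
  simp only [interiorEmb, ne_eq, Fin.ext_iff, Fin.val_last]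
  omega

theorem eR_eq_single : eR n = Pi.single (Fin.last n) 1 := by
  ext i
  simp [eR, Pi.single_apply, Fin.ext_iff]

theorem eL_eq_single : eL n = Pi.single 0 1 := by
  ext i
  simp only [eL, Pi.single_apply, Fin.val_eq_zero_iff]

theorem gridVec_zero : gridVec n 0 = 0 := by
  simp [gridVec]

theorem gridVec_last (hn : n ≠ 0) : gridVec n (Fin.last n) = 1 := by
  simp [gridVec, hn]

theorem Zmat_zero : Zmat n 0 = onesVec n := by
  ext j
  simp [Zmat, onesVec]

theorem Zmat_last (hn : n ≠ 0) : Zmat n (Fin.last n) = gridVec n := by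
  ext j
  simp [Zmat, hn]

theorem Zmat_interiorEmb (m : Fin (n-1)) :
    Zmat n (interiorEmb n m) = Pi.single (interiorEmb n m) 1 := by
  ext j
  have h0 : (interiorEmb n m).1 ≠ 0 := Nat.succ_ne_zero _
  have hl : (interiorEmb n m).1 ≠ n := fun h => interiorEmb_ne_last m (Fin.ext h)
  simp only [Zmat, h0, hl, if_false, Pi.single_apply, eq_comm]

theorem pad_apply_zero_left (B : Matrix (Fin (n-1)) (Fin (n-1)) ℝ) (j : Fin (n+1)) :
    pad n B 0 j = 0 := by
  simp [pad]

theorem pad_apply_last_left (B : Matrix (Fin (n-1)) (Fin (n-1)) ℝ) (j : Fin (n+1)) :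
    pad n B (Fin.last n) j = 0 := by
  simp [pad]

theorem pad_apply_zero_right (B : Matrix (Fin (n-1)) (Fin (n-1)) ℝ) (i : Fin (n+1)) :
    pad n B i 0 = 0 := by
  simp [pad]

theorem pad_apply_last_right (B : Matrix (Fin (n-1)) (Fin (n-1)) ℝ) (i : Fin (n+1)) :
    pad n B i (Fin.last n) = 0 := by
  simp [pad]

theorem pad_apply_interiorEmb (B : Matrix (Fin (n-1)) (Fin (n-1)) ℝ) (a b : Fin (n-1)) :
    pad n B (interiorEmb n a) (interiorEmb n b) = B a b := by
  have := a.isLt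
  have := b.isLt
  have ha : 0 < (interiorEmb n a).1 ∧ (interiorEmb n a).1 < n := by simp only [interiorEmb]; omega
  have hb : 0 < (interiorEmb n b).1 ∧ (interiorEmb n b).1 < n := by simp only [interiorEmb]; omega
  rw [pad, dif_pos ha, dif_pos hb]
  rfl

theorem Zmat_succ_zero (i : Fin n) : Zmat n i.succ 0 = 0 := by
  simp [Zmat, gridVec]

theorem isLowerTriangular_Zmat_submatrix_succ :
    (Zmat n |>.submatrix Fin.succ Fin.succ).IsLowerTriangular := by
  intro i j hij
  have hij : i < j := hij
  have hi : i.1 + 1 ≠ n := by omega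
  simp [Zmat, hi, hij.ne]

theorem Zmat_succ_succ_self (hn : n ≠ 0) (i : Fin n) : Zmat n i.succ i.succ = 1 := by
  by_cases hi : i.1 + 1 = n
  · rw [show i.succ = Fin.last n from Fin.ext hi, Zmat_last hn, gridVec_last hn]
  · simp [Zmat, hi]

theorem det_Zmat (hn : n ≠ 0) : (Zmat n).det = 1 := by
  rw [det_succ_column_zero, Fin.sum_univ_succ]
  simp only [Zmat_succ_zero, mul_zero, zero_mul, Finset.sum_const_zero, add_zero,
    Fin.val_zero, pow_zero, one_mul, Fin.succAbove_zero, Zmat_zero, onesVec]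
  rw [det_of_isLowerTriangular _ isLowerTriangular_Zmat_submatrix_succ]
  simp [Zmat_succ_succ_self hn]

section Congruence

variable {A : Matrix (Fin (n+1)) (Fin (n+1)) ℝ}

theorem Zmat_apply_last_sub_apply_zero (hn : n ≠ 0) (k : Fin (n+1)) :
    Zmat n k (Fin.last n) - Zmat n k 0 = eR n k := by
  rcases eq_zero_or_eq_last_or_exists_interiorEmb k with rfl | rfl | ⟨m, rfl⟩
  · simp [Zmat_zero, onesVec, eR_eq_single, hn]
  · simp [Zmat_last hn, gridVec_last hn, gridVec_zero, eR_eq_single]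
  · simp [Zmat_interiorEmb, interiorEmb_ne_zero, interiorEmb_ne_last,
      eR_eq_single]

theorem Zmat_dotProduct_mulVec_Zmat_zero (h1 : A *ᵥ onesVec n = 0) (k : Fin (n+1)) :
    Zmat n k ⬝ᵥ A *ᵥ Zmat n 0 = 0 := by
  rw [Zmat_zero, h1, dotProduct_zero]

theorem Zmat_dotProduct_mulVec_Zmat_last (hn : n ≠ 0) (hx : A *ᵥ gridVec n = eR n - eL n)
    (k : Fin (n+1)) : Zmat n k ⬝ᵥ A *ᵥ Zmat n (Fin.last n) = eR n k := by
  rw [Zmat_last hn, hx, dotProduct_sub, eR_eq_single, eL_eq_single, dotProduct_single_one,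
    dotProduct_single_one, ← eR_eq_single, Zmat_apply_last_sub_apply_zero hn]

theorem Zmat_dotProduct_mulVec_Zmat_interiorEmb (hn : n ≠ 0) (hA : A.IsSymm)
    (h1 : A *ᵥ onesVec n = 0) (hx : A *ᵥ gridVec n = eR n - eL n)
    (k : Fin (n+1)) (m : Fin (n-1)) :
    Zmat n k ⬝ᵥ A *ᵥ Zmat n (interiorEmb n m) =
      pad n (centralBlock n A) k (interiorEmb n m) := by
  rw [hA.dotProduct_mulVec_comm, Zmat_interiorEmb, single_one_dotProduct]
  rcases eq_zero_or_eq_last_or_exists_interiorEmb k with rfl | rfl | ⟨l, rfl⟩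
  · rw [Zmat_zero, h1, pad_apply_zero_left, Pi.zero_apply]
  · rw [Zmat_last hn, hx, pad_apply_last_left, eR_eq_single, eL_eq_single]
    simp [interiorEmb_ne_zero, interiorEmb_ne_last]
  · rw [Zmat_interiorEmb, mulVec_single_one, pad_apply_interiorEmb, centralBlock,
      submatrix_apply, col_apply, hA.apply]

end Congruence

theorem congruence_diag
    (n : ℕ) (hn : 2 ≤ n) (A : Matrix (Fin (n+1)) (Fin (n+1)) ℝ)
    (hsym : A.IsSymm)
    (h1 : A *ᵥ onesVec n = 0)
    (hx : A *ᵥ gridVec n = eR n - eL n) :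
    IsUnit (Zmat n).det ∧
    Zmat n * A * (Zmat n)ᵀ = pad n (centralBlock n A) + vecMulVec (eR n) (eR n) := by
  have hn0 : n ≠ 0 := by omega
  refine ⟨by simp [det_Zmat hn0], ?_⟩
  ext k j
  rw [mul_mul_apply, transpose_transpose, Matrix.add_apply, vecMulVec_apply]
  rcases eq_zero_or_eq_last_or_exists_interiorEmb j with rfl | rfl | ⟨m, rfl⟩
  · simp [Zmat_dotProduct_mulVec_Zmat_zero h1, pad_apply_zero_right, eR_eq_single,
      Pi.single_apply, hn0]
  · simp [Zmat_dotProduct_mulVec_Zmat_last hn0 hx, pad_apply_last_right, eR_eq_single]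
  · simp [Zmat_dotProduct_mulVec_Zmat_interiorEmb hn0 hsym h1 hx, eR_eq_single,
      Pi.single_apply, interiorEmb_ne_last]
end
end
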